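/- Let Φ : ℝ^m → ℝ^m be a smooth involution with everywhere nonvanishing Jacobian determinant and let π : ℝ^m → ℝ_{>0} be a probability density. Define the involutive Monte Carlo kernel K(q, A) = a(q)·1{Φ(q) ∈ A} + (1 - a(q))·1{q ∈ A}, where a(q) = min{1, (π(Φ(q))/π(q))·|det ∇Φ(q)|}. Then K satisfies detailed balance with respect to the measure with density π: for all Borel sets A, B, ∫_A K(q, B) π(q) dq = ∫_B K(q, A) π(q) dq. -/

import Mathlib

/-!
Write `J(q) = |det ∇Φ(q)|`. The flux `π(q) a(q) = min (π q) (J(q) π(Φ q))` from `q` to `Φ q`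
satisfies `J(q) · flux(Φ q) = flux(q)`, because the chain rule applied to `Φ ∘ Φ = id` gives
`J(Φ q) J(q) = 1`. By the change of variables `q ↦ Φ q` (for which `Φ` is its own inverse), the
mass moving from `A` into `B` by a jump, `∫_{A ∩ Φ⁻¹ B} flux`, equals the mass moving from `B` into
`A`. The remaining part of `∫_A K(q, B) π(q) dq` is the rejected mass `∫_{A ∩ B} (π - flux)`,
which is symmetric in `A` and `B`.
-/

open MeasureTheory Function

namespace Function.Involutive

section Derivative

variable {𝕜 E : Type*} [NontriviallyNormedField 𝕜] [NormedAddCommGroup E] [NormedSpace 𝕜 E]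
  {Φ : E → E}

theorem fderiv_comp_fderiv (hΦ : Involutive Φ) {q : E} (hq : DifferentiableAt 𝕜 Φ q)
    (hΦq : DifferentiableAt 𝕜 Φ (Φ q)) :
    (fderiv 𝕜 Φ (Φ q)).comp (fderiv 𝕜 Φ q) = ContinuousLinearMap.id 𝕜 E := by
  have hcomp := hΦq.hasFDerivAt.comp q hq.hasFDerivAt
  rw [show Φ ∘ Φ = id from funext hΦ] at hcomp
  exact hcomp.unique (hasFDerivAt_id q)

theorem det_fderiv_mul_det_fderiv (hΦ : Involutive Φ) {q : E} (hq : DifferentiableAt 𝕜 Φ q)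
    (hΦq : DifferentiableAt 𝕜 Φ (Φ q)) :
    (fderiv 𝕜 Φ (Φ q)).det * (fderiv 𝕜 Φ q).det = 1 := by
  have hdet := congrArg ContinuousLinearMap.det (hΦ.fderiv_comp_fderiv hq hΦq)
  rwa [ContinuousLinearMap.det, ContinuousLinearMap.toLinearMap_comp, LinearMap.det_comp,
    ContinuousLinearMap.det, ContinuousLinearMap.coe_id, LinearMap.det_id] at hdet

end Derivative

section ChangeOfVariables

variable {E F : Type*} [NormedAddCommGroup E] [NormedSpace ℝ E] [FiniteDimensional ℝ E]
  [MeasurableSpace E] [BorelSpace E] (μ : Measure E) [μ.IsAddHaarMeasure]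
  [NormedAddCommGroup F] [NormedSpace ℝ F] {Φ : E → E}

theorem integral_abs_det_fderiv_smul_comp (hΦ : Involutive Φ) (hd : Differentiable ℝ Φ)
    (f : E → F) : ∫ q, |(fderiv ℝ Φ q).det| • f (Φ q) ∂μ = ∫ q, f q ∂μ := by
  have := integral_image_eq_integral_abs_det_fderiv_smul μ MeasurableSet.univ
    (fun q _ => (hd q).hasFDerivAt.hasFDerivWithinAt) hΦ.injective.injOn f
  rw [Set.image_univ, hΦ.surjective.range_eq, Measure.restrict_univ] at this
  exact this.symm

theorem integrable_abs_det_fderiv_smul_comp (hΦ : Involutive Φ) (hd : Differentiable ℝ Φ)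
    {f : E → F} (hf : Integrable f μ) : Integrable (fun q => |(fderiv ℝ Φ q).det| • f (Φ q)) μ := by
  have := integrableOn_image_iff_integrableOn_abs_det_fderiv_smul μ MeasurableSet.univ
    (fun q _ => (hd q).hasFDerivAt.hasFDerivWithinAt) hΦ.injective.injOn f
  rw [Set.image_univ, hΦ.surjective.range_eq, integrableOn_univ] at this
  exact integrableOn_univ.1 (this.1 hf)

end ChangeOfVariables

end Function.Involutive

section AcceptanceFlux

variable {E : Type*} [NormedAddCommGroup E] [NormedSpace ℝ E]

/-- The density `π(q) a(q)` of the accepted moves `q ↦ Φ q`. -/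
noncomputable def acceptanceFlux (Φ : E → E) (π : E → ℝ) (q : E) : ℝ :=
  min (π q) (|(fderiv ℝ Φ q).det| * π (Φ q))

theorem min_one_mul_eq_acceptanceFlux (Φ : E → E) {π : E → ℝ} {q : E} (hπq : 0 < π q) :
    min 1 (π (Φ q) / π q * |(fderiv ℝ Φ q).det|) * π q = acceptanceFlux Φ π q := by
  rw [min_mul_of_nonneg _ _ hπq.le, one_mul, acceptanceFlux]
  congr 1
  field_simp

variable {Φ : E → E}

theorem Function.Involutive.abs_det_fderiv_mul_acceptanceFlux (hΦ : Involutive Φ)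
    (hd : Differentiable ℝ Φ) (π : E → ℝ) (q : E) :
    |(fderiv ℝ Φ q).det| * acceptanceFlux Φ π (Φ q) = acceptanceFlux Φ π q := by
  have hJ := hΦ.det_fderiv_mul_det_fderiv (hd q) (hd (Φ q))
  rw [acceptanceFlux, mul_min_of_nonneg _ _ (abs_nonneg _), hΦ q, min_comm, acceptanceFlux,
    ← mul_assoc, ← abs_mul, mul_comm (fderiv ℝ Φ q).det, hJ, abs_one, one_mul]

variable [FiniteDimensional ℝ E] [MeasurableSpace E] [BorelSpace E]
  (μ : Measure E) [μ.IsAddHaarMeasure]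

theorem Function.Involutive.integrable_acceptanceFlux (hΦ : Involutive Φ)
    (hd : Differentiable ℝ Φ) {π : E → ℝ} (hπ : Integrable π μ) :
    Integrable (acceptanceFlux Φ π) μ :=
  hπ.inf (hΦ.integrable_abs_det_fderiv_smul_comp μ hd hπ)

theorem Function.Involutive.integral_indicator_acceptanceFlux_comm (hΦ : Involutive Φ)
    (hd : Differentiable ℝ Φ) (π : E → ℝ) (A B : Set E) :
    ∫ q, (A ∩ Φ ⁻¹' B).indicator (acceptanceFlux Φ π) q ∂μ
      = ∫ q, (B ∩ Φ ⁻¹' A).indicator (acceptanceFlux Φ π) q ∂μ := by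
  rw [← hΦ.integral_abs_det_fderiv_smul_comp μ hd ((B ∩ Φ ⁻¹' A).indicator _)]
  congr 1 with q
  have hmem : Φ q ∈ B ∩ Φ ⁻¹' A ↔ q ∈ A ∩ Φ ⁻¹' B := by
    simp only [Set.mem_inter_iff, Set.mem_preimage, hΦ q, and_comm]
  by_cases hq : q ∈ A ∩ Φ ⁻¹' B
  · rw [Set.indicator_of_mem hq, Set.indicator_of_mem (hmem.2 hq), smul_eq_mul,
      hΦ.abs_det_fderiv_mul_acceptanceFlux hd]
  · rw [Set.indicator_of_notMem hq, Set.indicator_of_notMem (mt hmem.1 hq), smul_zero]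

end AcceptanceFlux

theorem Set.indicator_kernel_mul_eq {α : Type*} (Φ : α → α) {a π f : α → ℝ}
    (hf : ∀ q, a q * π q = f q) (A B : Set α) :
    A.indicator (fun q => (a q * B.indicator (fun _ => (1 : ℝ)) (Φ q)
      + (1 - a q) * B.indicator (fun _ => (1 : ℝ)) q) * π q)
      = (A ∩ Φ ⁻¹' B).indicator f + (A ∩ B).indicator (π - f) := by
  classical
  ext q
  simp only [Pi.add_apply, Pi.sub_apply, Set.indicator_apply, Set.mem_inter_iff,
    Set.mem_preimage]
  have hfq := hf q
  split_ifs <;> grind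

theorem involutive_monte_carlo_detailed_balance_general
    (m : ℕ)
    (Φ : EuclideanSpace ℝ (Fin m) → EuclideanSpace ℝ (Fin m))
    (hΦsmooth : ContDiff ℝ 1 Φ)
    (hΦinv : Function.Involutive Φ)
    (π : EuclideanSpace ℝ (Fin m) → ℝ)
    (hπpos : ∀ q, 0 < π q)
    (hπint : Integrable π)
    (a : EuclideanSpace ℝ (Fin m) → ℝ)
    (ha : ∀ q, a q = min 1 (π (Φ q) / π q *
      |LinearMap.det ((fderiv ℝ Φ q : _ →L[ℝ] _) :
        EuclideanSpace ℝ (Fin m) →ₗ[ℝ] EuclideanSpace ℝ (Fin m))|))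
    (K : EuclideanSpace ℝ (Fin m) → Set (EuclideanSpace ℝ (Fin m)) → ℝ)
    (hK : ∀ q A, K q A = a q * A.indicator (fun _ => (1 : ℝ)) (Φ q)
      + (1 - a q) * A.indicator (fun _ => (1 : ℝ)) q) :
    ∀ A B : Set (EuclideanSpace ℝ (Fin m)), MeasurableSet A → MeasurableSet B →
      ∫ q in A, K q B * π q = ∫ q in B, K q A * π q := by
  intro A B hA hB
  have hd : Differentiable ℝ Φ := hΦsmooth.differentiable one_ne_zero
  have hΦm : Measurable Φ := hΦsmooth.continuous.measurable
  have hflux : ∀ q, a q * π q = acceptanceFlux Φ π q := fun q => by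
    rw [ha q]
    exact min_one_mul_eq_acceptanceFlux Φ (hπpos q)
  have hF := hΦinv.integrable_acceptanceFlux volume hd hπint
  have hR := hπint.sub hF
  simp only [hK]
  rw [← integral_indicator hA, ← integral_indicator hB, Set.indicator_kernel_mul_eq Φ hflux,
    Set.indicator_kernel_mul_eq Φ hflux,
    integral_add' (hF.indicator (hA.inter (hΦm hB))) (hR.indicator (hA.inter hB)),
    integral_add' (hF.indicator (hB.inter (hΦm hA))) (hR.indicator (hB.inter hA)),
    hΦinv.integral_indicator_acceptanceFlux_comm volume hd, Set.inter_comm B A]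

theorem involutive_monte_carlo_detailed_balance
    (m : ℕ)
    (Φ : EuclideanSpace ℝ (Fin m) → EuclideanSpace ℝ (Fin m))
    (hΦsmooth : ContDiff ℝ 1 Φ)
    (hΦinv : Function.Involutive Φ)
    (hjac : ∀ q, LinearMap.det ((fderiv ℝ Φ q : _ →L[ℝ] _) :
      EuclideanSpace ℝ (Fin m) →ₗ[ℝ] EuclideanSpace ℝ (Fin m)) ≠ 0)
    (π : EuclideanSpace ℝ (Fin m) → ℝ)
    (hπpos : ∀ q, 0 < π q)
    (hπint : Integrable π)
    (hπprob : ∫ q, π q = 1)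
    (a : EuclideanSpace ℝ (Fin m) → ℝ)
    (ha : ∀ q, a q = min 1 (π (Φ q) / π q *
      |LinearMap.det ((fderiv ℝ Φ q : _ →L[ℝ] _) :
        EuclideanSpace ℝ (Fin m) →ₗ[ℝ] EuclideanSpace ℝ (Fin m))|))
    (K : EuclideanSpace ℝ (Fin m) → Set (EuclideanSpace ℝ (Fin m)) → ℝ)
    (hK : ∀ q A, K q A = a q * A.indicator (fun _ => (1 : ℝ)) (Φ q)
      + (1 - a q) * A.indicator (fun _ => (1 : ℝ)) q) :
    ∀ A B : Set (EuclideanSpace ℝ (Fin m)), MeasurableSet A → MeasurableSet B →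
      ∫ q in A, K q B * π q = ∫ q in B, K q A * π q :=
  involutive_monte_carlo_detailed_balance_general m Φ hΦsmooth hΦinv π hπpos hπint a ha K hK
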